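/- Let G be an ordinary unweighted graph on n vertices with minimum degree d_min ≥ 1. Then for any δ ∈ (0,1), the number of eigenvalues of the normalized Laplacian N = D^{-1/2} L D^{-1/2} that are at most 1-δ is at most n/(δ² d_min). -/

import Mathlib

/-!
Write `B = D^{-1/2} A D^{-1/2}`, so that `N = 1 - B` once all degrees are positive.
An orthonormal eigenvector of `N` for `μ ≤ 1 - δ` is one of `B` for `1 - μ ≥ δ`, so `m δ²`
is at most the sum of the squared eigenvalues `‖B f_a‖²`. Bessel's inequality applied to
each row of `B` bounds this sum by the squared Frobenius norm
`∑_{u ~ v} 1 / (d_u d_v) ≤ n / d_min`.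
-/

open Matrix

section Bessel

variable {ι κ : Type*} [Fintype ι] [Fintype κ]

lemma real_inner_toLp_toLp (x y : ι → ℝ) :
    inner ℝ (WithLp.toLp 2 x) (WithLp.toLp 2 y) = x ⬝ᵥ y := by
  rw [EuclideanSpace.inner_toLp_toLp, star_trivial, dotProduct_comm]

theorem sum_sq_dotProduct_le_of_orthonormal [DecidableEq κ] {f : κ → ι → ℝ}
    (horth : ∀ a b, f a ⬝ᵥ f b = if a = b then 1 else 0) (x : ι → ℝ) :
    ∑ a, (f a ⬝ᵥ x) ^ 2 ≤ x ⬝ᵥ x := by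
  have hf : Orthonormal ℝ fun a => WithLp.toLp 2 (f a) := by
    rw [orthonormal_iff_ite]
    simpa only [real_inner_toLp_toLp] using horth
  simpa only [real_inner_toLp_toLp, Real.norm_eq_abs, sq_abs, ← real_inner_self_eq_norm_sq]
    using hf.sum_inner_products_le (x := WithLp.toLp 2 x) (s := Finset.univ)

theorem sum_sq_eigenvalues_le_sum_sq_entries [DecidableEq κ] (M : Matrix ι ι ℝ)
    {f : κ → ι → ℝ} (c : κ → ℝ)
    (horth : ∀ a b, f a ⬝ᵥ f b = if a = b then 1 else 0)
    (heig : ∀ a, M *ᵥ f a = c a • f a) :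
    ∑ a, c a ^ 2 ≤ ∑ u, ∑ v, M u v ^ 2 := by
  have hnorm : ∀ a, c a ^ 2 = ∑ u, (f a ⬝ᵥ M u) ^ 2 := fun a => by
    calc c a ^ 2 = (M *ᵥ f a) ⬝ᵥ (M *ᵥ f a) := by
          rw [heig, smul_dotProduct, dotProduct_smul, horth, if_pos rfl, smul_eq_mul,
            smul_eq_mul, mul_one, sq]
      _ = ∑ u, (f a ⬝ᵥ M u) ^ 2 := by
          simp only [dotProduct, mulVec, sq, mul_comm]
  calc ∑ a, c a ^ 2 = ∑ u, ∑ a, (f a ⬝ᵥ M u) ^ 2 := by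
        rw [Finset.sum_comm]; exact Finset.sum_congr rfl fun a _ => hnorm a
    _ ≤ ∑ u, M u ⬝ᵥ M u :=
        Finset.sum_le_sum fun u _ => sum_sq_dotProduct_le_of_orthonormal horth (M u)
    _ = ∑ u, ∑ v, M u v ^ 2 := by simp only [dotProduct, sq]

end Bessel

namespace SimpleGraph

variable {V : Type*} [Fintype V] [DecidableEq V] (G : SimpleGraph V) [DecidableRel G.Adj]

noncomputable def normalizedAdjMatrix : Matrix V V ℝ :=
  diagonal (fun u => 1 / √(G.degree u)) * G.adjMatrix ℝ *
    diagonal (fun u => 1 / √(G.degree u))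

theorem normalizedAdjMatrix_apply (u v : V) :
    G.normalizedAdjMatrix u v =
      if G.Adj u v then 1 / (√(G.degree u) * √(G.degree v)) else 0 := by
  rw [normalizedAdjMatrix, mul_diagonal, diagonal_mul, adjMatrix_apply]
  split_ifs <;> ring

theorem normalizedLaplacian_eq_one_sub_normalizedAdjMatrix (hdeg : ∀ u, 0 < G.degree u) :
    diagonal (fun u => 1 / √(G.degree u)) *
        (diagonal (fun u => (G.degree u : ℝ)) - G.adjMatrix ℝ) *
        diagonal (fun u => 1 / √(G.degree u)) = 1 - G.normalizedAdjMatrix := by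
  have hD : diagonal (fun u => 1 / √(G.degree u)) * diagonal (fun u => (G.degree u : ℝ)) *
      diagonal (fun u => 1 / √(G.degree u)) = 1 := by
    rw [diagonal_mul_diagonal, diagonal_mul_diagonal, ← diagonal_one]
    congr 1
    funext u
    have hu : (0 : ℝ) < G.degree u := by exact_mod_cast hdeg u
    field_simp
    rw [Real.sq_sqrt hu.le]
  rw [Matrix.mul_sub, Matrix.sub_mul, hD, normalizedAdjMatrix]

theorem sum_sq_normalizedAdjMatrix_le {dmin : ℕ} (hdmin : 0 < dmin)
    (hdeg : ∀ u, dmin ≤ G.degree u) :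
    ∑ u, ∑ v, G.normalizedAdjMatrix u v ^ 2 ≤ Fintype.card V / dmin := by
  have hdmin' : (0 : ℝ) < dmin := by exact_mod_cast hdmin
  have hrow : ∀ u, ∑ v, G.normalizedAdjMatrix u v ^ 2 ≤ 1 / dmin := fun u => by
    have hu : (0 : ℝ) < G.degree u := by exact_mod_cast hdmin.trans_le (hdeg u)
    calc ∑ v, G.normalizedAdjMatrix u v ^ 2
        ≤ ∑ v, if G.Adj u v then 1 / ((G.degree u : ℝ) * dmin) else 0 := by
          refine Finset.sum_le_sum fun v _ => ?_
          rw [normalizedAdjMatrix_apply]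
          split_ifs
          · rw [div_pow, mul_pow, Real.sq_sqrt (by positivity), Real.sq_sqrt (by positivity),
              one_pow]
            gcongr
            exact_mod_cast hdeg v
          · simp
      _ = 1 / dmin := by
          rw [Finset.sum_ite, Finset.sum_const_zero, add_zero, Finset.sum_const, nsmul_eq_mul,
            ← neighborFinset_eq_filter, card_neighborFinset_eq_degree]
          field_simp
  calc ∑ u, ∑ v, G.normalizedAdjMatrix u v ^ 2 ≤ ∑ _u : V, 1 / (dmin : ℝ) :=
        Finset.sum_le_sum fun u _ => hrow u
    _ = Fintype.card V / dmin := by simp [div_eq_mul_inv]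

end SimpleGraph

theorem stmt9_general {n : ℕ} (G : SimpleGraph (Fin n)) [DecidableRel G.Adj]
    (dmin : ℕ) (hdmin : 1 ≤ dmin) (hdeg : ∀ u, dmin ≤ G.degree u)
    (δ : ℝ) (hδ0 : 0 < δ)
    (N : Matrix (Fin n) (Fin n) ℝ)
    (hN : N = Matrix.diagonal (fun u => 1 / Real.sqrt (G.degree u)) *
        (Matrix.diagonal (fun u => (G.degree u : ℝ)) - G.adjMatrix ℝ) *
        Matrix.diagonal (fun u => 1 / Real.sqrt (G.degree u)))
    {m : ℕ} (f : Fin m → (Fin n → ℝ)) (μ : Fin m → ℝ)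
    (horth : ∀ a a', f a ⬝ᵥ f a' = if a = a' then 1 else 0)
    (heig : ∀ a, N.mulVec (f a) = μ a • f a)
    (hμ : ∀ a, μ a ≤ 1 - δ) :
    (m : ℝ) ≤ n / (δ ^ 2 * dmin) := by
  rw [G.normalizedLaplacian_eq_one_sub_normalizedAdjMatrix fun u => hdmin.trans (hdeg u)]
    at hN
  have hadj : ∀ a, G.normalizedAdjMatrix *ᵥ f a = (1 - μ a) • f a := fun a => by
    rw [← sub_sub_cancel 1 G.normalizedAdjMatrix, ← hN, sub_mulVec, one_mulVec, heig, sub_smul,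
      one_smul]
  have hδ : ∀ a, δ ^ 2 ≤ (1 - μ a) ^ 2 := fun a =>
    pow_le_pow_left₀ hδ0.le (by linarith [hμ a]) 2
  have hbound : m * δ ^ 2 ≤ n / dmin := calc
    m * δ ^ 2 = ∑ _a : Fin m, δ ^ 2 := by simp
    _ ≤ ∑ a, (1 - μ a) ^ 2 := Finset.sum_le_sum fun a _ => hδ a
    _ ≤ ∑ u, ∑ v, G.normalizedAdjMatrix u v ^ 2 :=
        sum_sq_eigenvalues_le_sum_sq_entries _ _ horth hadj
    _ ≤ n / dmin := by simpa using G.sum_sq_normalizedAdjMatrix_le hdmin hdeg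
  have hdmin' : (0 : ℝ) < dmin := by exact_mod_cast hdmin
  rw [le_div_iff₀ (by positivity), ← mul_assoc, ← le_div_iff₀ hdmin']
  exact hbound

/-- For an unweighted graph on `n` vertices with minimum degree `d_min ≥ 1`, the number
of eigenvalues of the normalized Laplacian that are at most `1 - δ` (counted with
multiplicity, i.e. via an orthonormal family of eigenvectors) is at most
`n/(δ² d_min)`. -/
theorem stmt9 {n : ℕ} (G : SimpleGraph (Fin n)) [DecidableRel G.Adj]
    (dmin : ℕ) (hdmin : 1 ≤ dmin) (hdeg : ∀ u, dmin ≤ G.degree u)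
    (δ : ℝ) (hδ0 : 0 < δ) (hδ1 : δ < 1)
    (N : Matrix (Fin n) (Fin n) ℝ)
    (hN : N = Matrix.diagonal (fun u => 1 / Real.sqrt (G.degree u)) *
        (Matrix.diagonal (fun u => (G.degree u : ℝ)) - G.adjMatrix ℝ) *
        Matrix.diagonal (fun u => 1 / Real.sqrt (G.degree u)))
    {m : ℕ} (f : Fin m → (Fin n → ℝ)) (μ : Fin m → ℝ)
    (horth : ∀ a a', f a ⬝ᵥ f a' = if a = a' then 1 else 0)
    (heig : ∀ a, N.mulVec (f a) = μ a • f a)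
    (hμ : ∀ a, μ a ≤ 1 - δ) :
    (m : ℝ) ≤ n / (δ ^ 2 * dmin) :=
  stmt9_general G dmin hdmin hdeg δ hδ0 N hN f μ horth heig hμ
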